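/- Let G be a connected VT⁺ graph on a finite set Y and let ε > 0. Fix a vertex y₀ ∈ Y, for each d from 0 to the diameter of G let n_d be the number of vertices at graph distance d from y₀, and set c = 1 / Σ_d n_d · e^{−ε·d}. Define H : Y → Y → ℝ by H(y,y') = c · e^{−ε·d(y,y')}, where d(y,y') is graph distance in G. Then H is a channel matrix from Y to Y (every row is nonnegative and sums to 1), H satisfies ε-differential privacy with respect to G, and under the uniform prior on Y the maximal utility over all guess functions g : Y → Y equals c, attained by the identity guess. -/

import Mathlib

open Finset

/-- The diameter of a graph on a finite vertex set. -/
noncomputable def graphDiam {Y : Type*} [Fintype Y] (G : SimpleGraph Y) : ℕ :=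
  Finset.univ.sup fun p : Y × Y => G.dist p.1 p.2

/-- The number of vertices at graph distance `d` from `r`. -/
noncomputable def nAtDist {Y : Type*} [Fintype Y] (G : SimpleGraph Y) (r : Y) (d : ℕ) : ℕ :=
  (Finset.univ.filter fun a => G.dist r a = d).card

/-- `∑ d from 0 to diam, n_d · e^{-ε d}`. -/
noncomputable def expDistSum {Y : Type*} [Fintype Y] (G : SimpleGraph Y) (ε : ℝ) (r : Y) : ℝ :=
  ∑ d ∈ Finset.range (graphDiam G + 1), (nAtDist G r d : ℝ) * Real.exp (-(ε * d))

/-- `ε`-differential privacy of a channel matrix with respect to a graph. -/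
def SatisfiesDP {Y Z : Type*} (G : SimpleGraph Y) (ε : ℝ) (H : Y → Z → ℝ) : Prop :=
  ∀ (z : Z) (y y' : Y), G.Adj y y' → H y z ≤ Real.exp ε * H y' z

/-- VT⁺ graphs. -/
def IsVTPlus {Y : Type*} [Fintype Y] (G : SimpleGraph Y) : Prop :=
  ∃ σ : Fin (Fintype.card Y) → (G ≃g G), ∀ y y' : Y, ∃ i, σ i y = y'

/-
Graph automorphisms preserve distance, so under the VT⁺ hypothesis the row sum
`Σ_{y'} e^{-ε d(y,y')}` is the same for every `y` as for `y₀`; hence every row of `H` sums to `c · Σ_d n_d e^{-ε d} = 1`.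
Moving along an edge changes a distance by at most one, which gives `ε`-differential privacy.
Every entry of `H` is at most its diagonal value `c`, so under the uniform prior no guess beats the
identity, whose utility is `c`.
-/

namespace SimpleGraph

variable {V W : Type*} {G : SimpleGraph V} {G' : SimpleGraph W}

theorem Hom.edist_map_le (f : G →g G') (u v : V) : G'.edist (f u) (f v) ≤ G.edist u v := by
  by_cases hr : G.Reachable u v
  · obtain ⟨p, hp⟩ := hr.exists_walk_length_eq_edist
    rw [← hp, ← p.length_map f]
    exact edist_le _
  · exact edist_eq_top_of_not_reachable hr ▸ le_top

theorem Iso.edist_map (φ : G ≃g G') (u v : V) : G'.edist (φ u) (φ v) = G.edist u v := by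
  refine le_antisymm (φ.toHom.edist_map_le u v) ?_
  simpa using φ.symm.toHom.edist_map_le (φ u) (φ v)

theorem Iso.dist_map (φ : G ≃g G') (u v : V) : G'.dist (φ u) (φ v) = G.dist u v := by
  rw [dist, dist, φ.edist_map]

theorem Adj.dist_le_dist_add_one (hadj : G.Adj v w) (u : V) : G.dist w u ≤ G.dist v u + 1 := by
  have h := hadj.reachable.dist_triangle_right u
  rw [dist_eq_one_iff_adj.mpr hadj] at h
  rw [dist_comm (u := w), dist_comm (u := v)]
  omega

theorem sum_comp_dist_iso_apply [Fintype V] {M : Type*} [AddCommMonoid M] (φ : G ≃g G)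
    (f : ℕ → M) (u : V) : ∑ a, f (G.dist (φ u) a) = ∑ a, f (G.dist u a) := by
  rw [← Equiv.sum_comp φ.toEquiv]
  exact sum_congr rfl fun a _ => congrArg f (φ.dist_map u a)

end SimpleGraph

theorem IsVTPlus.exists_iso_apply_eq {Y : Type*} [Fintype Y] {G : SimpleGraph Y}
    (hVT : IsVTPlus G) (y y' : Y) : ∃ φ : G ≃g G, φ y = y' := by
  obtain ⟨σ, hσ⟩ := hVT
  obtain ⟨i, hi⟩ := hσ y y'
  exact ⟨σ i, hi⟩

theorem sum_exp_neg_dist_eq_expDistSum {Y : Type*} [Fintype Y] (G : SimpleGraph Y) (ε : ℝ)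
    (r : Y) : ∑ a, Real.exp (-(ε * G.dist r a)) = expDistSum G ε r := by
  have hmaps : ∀ a ∈ (univ : Finset Y), G.dist r a ∈ range (graphDiam G + 1) := fun a _ =>
    mem_range_succ_iff.mpr (le_sup (f := fun p : Y × Y => G.dist p.1 p.2) (mem_univ (r, a)))
  rw [expDistSum, ← sum_fiberwise_of_maps_to hmaps]
  refine sum_congr rfl fun d _ => ?_
  rw [sum_congr rfl fun a ha => by rw [(mem_filter.mp ha).2], sum_const, nsmul_eq_mul, nAtDist]

theorem exp_neg_dist_le_exp_mul_of_adj {Y : Type*} {G : SimpleGraph Y} {ε : ℝ} (hε : 0 ≤ ε)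
    {y y' : Y} (hadj : G.Adj y y') (z : Y) :
    Real.exp (-(ε * G.dist y z)) ≤ Real.exp ε * Real.exp (-(ε * G.dist y' z)) := by
  rw [← Real.exp_add, Real.exp_le_exp]
  have h : (G.dist y' z : ℝ) ≤ G.dist y z + 1 := by
    exact_mod_cast hadj.dist_le_dist_add_one z
  linarith [mul_le_mul_of_nonneg_left h hε]

theorem sum_uniform_mul_const {Y : Type*} [Fintype Y] [Nonempty Y] (c : ℝ) :
    ∑ _z : Y, (1 / (Fintype.card Y : ℝ)) * c = c := by
  rw [sum_const, card_univ, nsmul_eq_mul]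
  field_simp

theorem stmt5_general {Y : Type*} [Fintype Y] [Nonempty Y]
    (G : SimpleGraph Y)
    (hVT : IsVTPlus G)
    (ε : ℝ) (hε : 0 < ε)
    (y₀ : Y) (c : ℝ) (hc : c = 1 / expDistSum G ε y₀)
    (H : Y → Y → ℝ)
    (hH : ∀ y y' : Y, H y y' = c * Real.exp (-(ε * G.dist y y'))) :
    (∀ y y' : Y, 0 ≤ H y y') ∧
    (∀ y : Y, ∑ y', H y y' = 1) ∧
    SatisfiesDP G ε H ∧
    (∀ g : Y → Y, ∑ z, (1 / (Fintype.card Y : ℝ)) * H (g z) z ≤ c) ∧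
    (∑ z, (1 / (Fintype.card Y : ℝ)) * H z z = c) := by
  have hrow (y : Y) : ∑ a, Real.exp (-(ε * G.dist y a)) = expDistSum G ε y₀ := by
    obtain ⟨φ, rfl⟩ := hVT.exists_iso_apply_eq y₀ y
    rw [G.sum_comp_dist_iso_apply φ (fun d : ℕ => Real.exp (-(ε * d))),
      sum_exp_neg_dist_eq_expDistSum]
  have hS : 0 < expDistSum G ε y₀ :=
    hrow y₀ ▸ sum_pos (fun a _ => Real.exp_pos _) univ_nonempty
  have hc0 : 0 ≤ c := hc ▸ by positivity
  have hle_c (y z : Y) : H y z ≤ c := by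
    rw [hH]
    refine mul_le_of_le_one_right hc0 (Real.exp_le_one_iff.mpr ?_)
    exact neg_nonpos.mpr (by positivity)
  refine ⟨fun y z => by rw [hH]; positivity, fun y => ?_, fun z y y' hadj => ?_, fun g => ?_, ?_⟩
  · simp_rw [hH, ← mul_sum, hrow, hc, one_div_mul_cancel hS.ne']
  · rw [hH, hH, mul_left_comm]
    exact mul_le_mul_of_nonneg_left (exp_neg_dist_le_exp_mul_of_adj hε.le hadj z) hc0
  · calc ∑ z, (1 / (Fintype.card Y : ℝ)) * H (g z) z
        ≤ ∑ _z : Y, (1 / (Fintype.card Y : ℝ)) * c :=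
          sum_le_sum fun z _ => mul_le_mul_of_nonneg_left (hle_c _ _) (by positivity)
      _ = c := sum_uniform_mul_const c
  · simp_rw [hH, SimpleGraph.dist_self, CharP.cast_eq_zero, mul_zero, neg_zero, Real.exp_zero,
      mul_one, sum_uniform_mul_const]

theorem stmt5 {Y : Type*} [Fintype Y] [Nonempty Y]
    (G : SimpleGraph Y)
    (hconn : G.Connected) (hVT : IsVTPlus G)
    (ε : ℝ) (hε : 0 < ε)
    (y₀ : Y) (c : ℝ) (hc : c = 1 / expDistSum G ε y₀)
    (H : Y → Y → ℝ)
    (hH : ∀ y y' : Y, H y y' = c * Real.exp (-(ε * G.dist y y'))) :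
    (∀ y y' : Y, 0 ≤ H y y') ∧
    (∀ y : Y, ∑ y', H y y' = 1) ∧
    SatisfiesDP G ε H ∧
    (∀ g : Y → Y, ∑ z, (1 / (Fintype.card Y : ℝ)) * H (g z) z ≤ c) ∧
    (∑ z, (1 / (Fintype.card Y : ℝ)) * H z z = c) :=
  stmt5_general G hVT ε hε y₀ c hc H hH
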